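/- arXiv:2004.04855 — 6 statements merged into one kernel-verified Lean document; each statement's English description precedes it below -/
import Mathlib

section
/- Let k be a field, m ≥ 2 and d ≥ 2 integers, and a = (a_1, …, a_{m−1}) ∈ k^{m−1}. For every i ∈ {1, …, m−1}, the elimination ideal ⟨g_1, …, g_{m−1}⟩ ∩ k[x_i, …, x_m] equals the ideal generated by g_i, …, g_{m−1} inside the subring k[x_i, …, x_m]; that is, every polynomial of ⟨g_1, …, g_{m−1}⟩ ⊆ k[x_1, …, x_m] depending only on the variables x_i, …, x_m is a k[x_i, …, x_m]-linear combination of g_i, …, g_{m−1}. -/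
open scoped BigOperators

/-- The polynomial `g_j = x_j^d − x_{j+1}^d − a_j` (0-indexed). -/
noncomputable def gPoly {k : Type*} [CommRing k] (m d : ℕ) (a : Fin (m - 1) → k)
    (j : Fin (m - 1)) : MvPolynomial (Fin m) k :=
  MvPolynomial.X ⟨j.1, by have := j.isLt; omega⟩ ^ d -
    MvPolynomial.X ⟨j.1 + 1, by have := j.isLt; omega⟩ ^ d -
    MvPolynomial.C (a j)

/-- The partial sum `A_i = ∑_{k ≥ i} a_k`. -/
def partialSum {k : Type*} [AddCommMonoid k] {n : ℕ} (a : Fin n → k) (i : Fin n) : k :=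
  ∑ t ∈ Finset.Ici i, a t

/-!
Write `I_t` for the ideal generated by `g_t, …, g_{m-1}`. If `p ∈ I_t` does not involve `x_t`,
then `p ∈ I_{t+1}`: as a polynomial in `x_t` over the other variables, `g_t = x_t^d - h` is monic
of degree `d`, while `p` and the generators of `I_{t+1}` are constants, so modulo `I_{t+1}` the
polynomial `p` becomes a multiple of a monic polynomial of larger degree, hence zero. Starting
from `I_0` and going up to `I_i` eliminates `x_0, …, x_{i-1}`. Finally, killing the variables
below `i` is a retraction onto `k[x_i, …]` that fixes `p` and the `g_j` with `j ≥ i`, which turns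
any combination of those `g_j` into one with coefficients in `k[x_i, …]`.
-/

open Polynomial in
theorem Polynomial.mem_map_C_of_mem_span_singleton_sup {R : Type*} [CommRing R] {I : Ideal R}
    {G p : R[X]} (hG : G.Monic) (hp : p.degree < G.degree)
    (hpI : p ∈ Ideal.span {G} ⊔ I.map C) : p ∈ I.map C := by
  obtain ⟨u, hu, v, hv, rfl⟩ := Submodule.mem_sup.mp hpI
  obtain ⟨c, rfl⟩ := Ideal.mem_span_singleton'.mp hu
  rw [← Ideal.mk_ker (I := I), ← ker_mapRingHom, RingHom.mem_ker] at hv ⊢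
  set f := mapRingHom (Ideal.Quotient.mk I)
  have hdvd : f G ∣ f (c * G + v) := by
    rw [map_add, hv, add_zero, map_mul]
    exact dvd_mul_left _ _
  by_contra hne
  have : Nontrivial (R ⧸ I) :=
    not_subsingleton_iff_nontrivial.mp fun _ => hne (Subsingleton.elim _ _)
  refine (hG.map (Ideal.Quotient.mk I)).not_dvd_of_degree_lt hne ?_ hdvd
  calc (f (c * G + v)).degree ≤ (c * G + v).degree := degree_map_le
    _ < G.degree := hp
    _ = (f G).degree := (hG.degree_map _).symm

namespace MvPolynomial

variable {σ R : Type*} [CommRing R]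

theorem mem_span_of_mem_span_insert_X_pow_sub {s : σ} {d : ℕ} (hd : 0 < d)
    {h p : MvPolynomial σ R} {S : Set (MvPolynomial σ R)}
    (hh : h ∈ supported R {v | v ≠ s}) (hS : S ⊆ supported R {v | v ≠ s})
    (hp : p ∈ supported R {v | v ≠ s}) (hpS : p ∈ Ideal.span (insert (X s ^ d - h) S)) :
    p ∈ Ideal.span S := by
  classical
  nontriviality R
  let ι : MvPolynomial {v // v ≠ s} R →ₐ[R] MvPolynomial σ R := rename Subtype.val
  have hι : ∀ q ∈ supported R {v | v ≠ s}, q ∈ Set.range ι := fun q hq => by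
    rwa [supported_eq_range_rename] at hq
  let e : MvPolynomial σ R ≃ₐ[R] Polynomial (MvPolynomial {v // v ≠ s} R) :=
    (renameEquiv R (Equiv.optionSubtypeNe s).symm).trans (optionEquivLeft R _)
  have heι : ∀ q, e (ι q) = Polynomial.C q := by
    have : e.toAlgHom.comp ι = Polynomial.CAlgHom := algHom_ext fun v => by simp [e, ι, v.2]
    exact fun q => DFunLike.congr_fun this q
  have heX : e (X s) = Polynomial.X := by simp [e]
  obtain ⟨h, rfl⟩ := hι h hh
  obtain ⟨p, rfl⟩ := hι p hp
  rw [← Set.image_preimage_eq_of_subset fun q hq => hι q (hS hq)] at hpS ⊢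
  rw [← Ideal.apply_mem_of_equiv_iff (f := e.toRingEquiv), Ideal.map_span] at hpS ⊢
  simp only [Set.image_insert_eq, Set.image_image, AlgEquiv.coe_ringEquiv, map_sub, map_pow, heX,
    heι] at hpS ⊢
  rw [Ideal.span_insert] at hpS
  have hdeg : (Polynomial.C p).degree < (Polynomial.X ^ d - Polynomial.C h).degree := by
    rw [Polynomial.degree_X_pow_sub_C hd]
    exact Polynomial.degree_C_le.trans_lt (by exact_mod_cast hd)
  have := Polynomial.mem_map_C_of_mem_span_singleton_sup (Polynomial.monic_X_pow_sub_C h hd.ne')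
    hdeg (I := Ideal.span (ι ⁻¹' S)) (by rwa [Ideal.map_span])
  rwa [Ideal.map_span] at this

theorem X_mem_supported_of_mem {s : Set σ} {v : σ} (hv : v ∈ s) : X v ∈ supported R s :=
  Algebra.subset_adjoin ⟨v, hv, rfl⟩

theorem mem_span_image_and_mem_supported_iff {ι : Type*} {s : Set σ} {S : Finset ι}
    {g : ι → MvPolynomial σ R} (hg : ∀ j ∈ S, g j ∈ supported R s) {p : MvPolynomial σ R} :
    (p ∈ Ideal.span (g '' S) ∧ p ∈ supported R s) ↔
      ∃ c : ι → MvPolynomial σ R, (∀ j, c j ∈ supported R s) ∧ p = ∑ j ∈ S, c j * g j := by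
  let κ : MvPolynomial σ R →ₐ[R] MvPolynomial σ R :=
    (rename Subtype.val).comp (killCompl (Subtype.val_injective (p := (· ∈ s))))
  have hκ_mem : ∀ q, κ q ∈ supported R s := fun q => by
    rw [supported_eq_range_rename]
    exact ⟨_, rfl⟩
  have hκ_id : ∀ q ∈ supported R s, κ q = q := by
    rw [supported_eq_range_rename]
    rintro _ ⟨q, rfl⟩
    simp [κ, killCompl_rename_app]
  constructor
  · rintro ⟨hspan, hp⟩
    obtain ⟨c, hc⟩ := (Submodule.mem_span_image_finset_iff_exists_fun' _).mp hspan
    refine ⟨fun j => κ (c j), fun j => hκ_mem _, ?_⟩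
    rw [← hκ_id p hp, ← hc, map_sum]
    exact Finset.sum_congr rfl fun j hj => by rw [smul_eq_mul, map_mul, hκ_id _ (hg j hj)]
  · rintro ⟨c, hc, rfl⟩
    exact ⟨Ideal.sum_mem _ fun j hj => Ideal.mul_mem_left _ _ (Ideal.subset_span ⟨j, hj, rfl⟩),
      Subalgebra.sum_mem _ fun j hj => Subalgebra.mul_mem _ (hc j) (hg j hj)⟩

end MvPolynomial

open MvPolynomial

section gPoly

variable {R : Type*} [CommRing R] {m d : ℕ} (a : Fin (m - 1) → R)

theorem gPoly_eq_X_pow_sub (j : Fin (m - 1)) :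
    gPoly m d a j = X ⟨j.1, by omega⟩ ^ d - (X ⟨j.1 + 1, by omega⟩ ^ d + C (a j)) :=
  sub_sub _ _ _

theorem gPoly_mem_supported {t : ℕ} {j : Fin (m - 1)} (htj : t ≤ j.1) :
    gPoly m d a j ∈ supported R {v : Fin m | t ≤ v.1} := by
  refine sub_mem (sub_mem (pow_mem (X_mem_supported_of_mem ?_) d)
    (pow_mem (X_mem_supported_of_mem ?_) d)) (Subalgebra.algebraMap_mem _ _)
  all_goals simp only [Set.mem_ofPred_eq]; omega

theorem mem_span_gPoly_succ_of_mem_span_gPoly (hd : 0 < d) {t i : ℕ} (hti : t < i)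
    {p : MvPolynomial (Fin m) R} (hp : p ∈ supported R {v : Fin m | i ≤ v.1})
    (hpt : p ∈ Ideal.span (gPoly m d a '' {j | t ≤ j.1})) :
    p ∈ Ideal.span (gPoly m d a '' {j | t + 1 ≤ j.1}) := by
  by_cases ht : t < m - 1
  · have hins : {j : Fin (m - 1) | t ≤ j.1} = insert ⟨t, ht⟩ {j | t + 1 ≤ j.1} := by
      ext j
      simp only [Set.mem_ofPred_eq, Set.mem_insert_iff, Fin.ext_iff]
      omega
    rw [hins, Set.image_insert_eq, gPoly_eq_X_pow_sub] at hpt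
    have hsub : {v : Fin m | t + 1 ≤ v.1} ⊆ {v | v ≠ ⟨t, by omega⟩} := fun v hv hvt => by
      simp [hvt] at hv
    refine mem_span_of_mem_span_insert_X_pow_sub hd ?_ ?_
      (supported_mono (fun v hv hvt => by simp [hvt] at hv; omega) hp) hpt
    · exact add_mem (pow_mem (X_mem_supported_of_mem (by simp [Fin.ext_iff])) d)
        (Subalgebra.algebraMap_mem _ _)
    · rintro _ ⟨j, hj, rfl⟩
      exact supported_mono hsub (gPoly_mem_supported a hj)
  · have hsame : {j : Fin (m - 1) | t ≤ j.1} = {j | t + 1 ≤ j.1} := by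
      ext j
      simp only [Set.mem_ofPred_eq]
      omega
    rwa [← hsame]

theorem mem_span_gPoly_of_mem_span_range (hd : 0 < d) {i : ℕ} {p : MvPolynomial (Fin m) R}
    (hp : p ∈ supported R {v : Fin m | i ≤ v.1}) (hpI : p ∈ Ideal.span (Set.range (gPoly m d a))) :
    p ∈ Ideal.span (gPoly m d a '' {j | i ≤ j.1}) := by
  suffices ∀ t ≤ i, p ∈ Ideal.span (gPoly m d a '' {j | t ≤ j.1}) from this i le_rfl
  intro t
  induction t with
  | zero => simpa [Set.image_univ] using hpI
  | succ t ih => exact fun ht => mem_span_gPoly_succ_of_mem_span_gPoly a hd ht hp (ih (by omega))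

end gPoly

open scoped Classical in
theorem statement5_general {k : Type*} [Field k] (m d : ℕ) (hd : 2 ≤ d)
    (a : Fin (m - 1) → k) (i : ℕ)
    (p : MvPolynomial (Fin m) k) :
    (p ∈ Ideal.span (Set.range (gPoly m d a)) ∧
        p ∈ MvPolynomial.supported k {v : Fin m | i ≤ v.1}) ↔
      ∃ c : Fin (m - 1) → MvPolynomial (Fin m) k,
        (∀ j, c j ∈ MvPolynomial.supported k {v : Fin m | i ≤ v.1}) ∧
        p = ∑ j ∈ Finset.univ.filter (fun j : Fin (m - 1) => i ≤ j.1),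
              c j * gPoly m d a j := by
  have hg : ∀ j ∈ Finset.univ.filter (fun j : Fin (m - 1) => i ≤ j.1),
      gPoly m d a j ∈ supported k {v : Fin m | i ≤ v.1} :=
    fun j hj => gPoly_mem_supported a (Finset.mem_filter.mp hj).2
  rw [← mem_span_image_and_mem_supported_iff hg, Finset.coe_filter_univ]
  exact ⟨fun ⟨hpI, hp⟩ => ⟨mem_span_gPoly_of_mem_span_range a (by omega) hp hpI, hp⟩,
    fun ⟨hpI, hp⟩ => ⟨Ideal.span_mono (Set.image_subset_range _ _) hpI, hp⟩⟩

open scoped Classical in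
theorem statement5 {k : Type*} [Field k] (m d : ℕ) (hm : 2 ≤ m) (hd : 2 ≤ d)
    (a : Fin (m - 1) → k) (i : ℕ) (hi : i < m - 1)
    (p : MvPolynomial (Fin m) k) :
    (p ∈ Ideal.span (Set.range (gPoly m d a)) ∧
        p ∈ MvPolynomial.supported k {v : Fin m | i ≤ v.1}) ↔
      ∃ c : Fin (m - 1) → MvPolynomial (Fin m) k,
        (∀ j, c j ∈ MvPolynomial.supported k {v : Fin m | i ≤ v.1}) ∧
        p = ∑ j ∈ Finset.univ.filter (fun j : Fin (m - 1) => i ≤ j.1),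
              c j * gPoly m d a j :=
  statement5_general m d hd a i p
end

section
/- Let k be a field, m ≥ 2 and d ≥ 2 integers, and a = (a_1, …, a_{m−1}) ∈ k^{m−1}. For every j ∈ {1, …, m}, the only polynomial in the ideal ⟨g_1, …, g_{m−1}⟩ ⊆ k[x_1, …, x_m] that depends on the single variable x_j alone is the zero polynomial; that is, ⟨g_1, …, g_{m−1}⟩ ∩ k[x_j] = {0}. -/
/-!
Pick a point `c` over an algebraically closed extension `Ω` of `k` whose `j`-th coordinate is
transcendental over `k` and at which every `g_i` vanishes: the relations `c_i^d - c_{i+1}^d = a_i`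
only prescribe the `d`-th powers `c_i^d = y^d + S_j - S_i` (with `S` the prefix sums of `a`),
so one may take `c_j = y` transcendental and `d`-th roots elsewhere. Every `p` in the ideal
vanishes at `c`, and if `p` only involves `x_j` this says `p(y) = 0`, forcing `p = 0`.
-/

open scoped BigOperators

open MvPolynomial

theorem MvPolynomial.eq_zero_of_mem_supported_singleton_of_aeval_eq_zero {R A σ : Type*}
    [CommRing R] [CommRing A] [Algebra R A] {c : σ → A} {j : σ} (hc : Transcendental R (c j))
    {p : MvPolynomial σ R} (hp : p ∈ supported R {j}) (h : aeval c p = 0) : p = 0 := by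
  rw [supported_eq_range_rename, AlgHom.mem_range] at hp
  obtain ⟨q, rfl⟩ := hp
  rw [aeval_rename] at h
  have hconst : c ∘ ((↑) : ({j} : Set σ) → σ) = fun _ => c j := by
    funext x
    rw [Function.comp_apply, x.2]
  rw [hconst] at h
  have hind : AlgebraicIndependent R (fun _ : ({j} : Set σ) => c j) :=
    algebraicIndependent_unique_type_iff.mpr hc
  rw [hind (h.trans (map_zero _).symm), map_zero]

theorem exists_transcendental_algebraicClosure (k : Type*) [Field k] :
    ∃ y : AlgebraicClosure (RatFunc k), Transcendental k y :=
  ⟨algebraMap _ _ RatFunc.X,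
    (transcendental_algebraMap_iff (algebraMap (RatFunc k) _).injective).mpr
      RatFunc.transcendental_X⟩

theorem exists_pow_eq_of_apply_eq_pow {ι Ω : Type*} [DecidableEq ι] [Field Ω] [IsAlgClosed Ω]
    {d : ℕ} (hd : 0 < d) (b : ι → Ω) {j : ι} {y : Ω} (hb : b j = y ^ d) :
    ∃ c : ι → Ω, c j = y ∧ ∀ i, c i ^ d = b i := by
  choose r hr using fun x : Ω => IsAlgClosed.exists_pow_nat_eq x hd
  refine ⟨fun i => if i = j then y else r (b i), if_pos rfl, fun i => ?_⟩
  by_cases hij : i = j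
  · subst hij; simp [hb]
  · simp [hij, hr]

theorem exists_aeval_gPoly_eq_zero {k Ω : Type*} [Field k] [Field Ω] [IsAlgClosed Ω]
    [Algebra k Ω] {m d : ℕ} (hd : 0 < d) (a : Fin (m - 1) → k) (j : Fin m) (y : Ω) :
    ∃ c : Fin m → Ω, c j = y ∧ ∀ i, aeval c (gPoly m d a i) = 0 := by
  set S : ℕ → Ω := fun n => ∑ t ∈ Finset.range n,
    if h : t < m - 1 then algebraMap k Ω (a ⟨t, h⟩) else 0 with hS
  obtain ⟨c, hcj, hc⟩ := exists_pow_eq_of_apply_eq_pow hd (fun i : Fin m => y ^ d + S j - S i)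
    (j := j) (by ring)
  refine ⟨c, hcj, fun i => ?_⟩
  have hstep : S (i + 1) = S i + algebraMap k Ω (a i) := by
    simp only [hS, Finset.sum_range_succ, dif_pos i.isLt]
  simp only [gPoly, map_sub, map_pow, aeval_X, aeval_C, hc, hstep]
  ring

theorem statement6_general {k : Type*} [Field k] (m d : ℕ) (hd : 2 ≤ d)
    (a : Fin (m - 1) → k) (j : Fin m)
    (p : MvPolynomial (Fin m) k)
    (hp : p ∈ Ideal.span (Set.range (gPoly m d a)))
    (hsupp : p ∈ MvPolynomial.supported k ({j} : Set (Fin m))) :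
    p = 0 := by
  obtain ⟨y, hy⟩ := exists_transcendental_algebraicClosure k
  obtain ⟨c, hcj, hc⟩ := exists_aeval_gPoly_eq_zero (by omega : 0 < d) a j y
  have hideal : Ideal.span (Set.range (gPoly m d a)) ≤ RingHom.ker (aeval c) :=
    Ideal.span_le.mpr (by rintro _ ⟨i, rfl⟩; exact hc i)
  exact eq_zero_of_mem_supported_singleton_of_aeval_eq_zero (hcj ▸ hy) hsupp (hideal hp)

theorem statement6 {k : Type*} [Field k] (m d : ℕ) (hm : 2 ≤ m) (hd : 2 ≤ d)
    (a : Fin (m - 1) → k) (j : Fin m)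
    (p : MvPolynomial (Fin m) k)
    (hp : p ∈ Ideal.span (Set.range (gPoly m d a)))
    (hsupp : p ∈ MvPolynomial.supported k ({j} : Set (Fin m))) :
    p = 0 :=
  statement6_general m d hd a j p hp hsupp
end

section
/- Let q be a prime number, k the algebraic closure of 𝔽_q, and d ≥ 2 an integer with q ∤ d. Let a ∈ k with a ≠ 0. Then the polynomial Y^d − T^d − a, regarded as a polynomial in Y over the rational function field k(T), is irreducible in k(T)[Y]. -/
open Polynomial

/-- Auxiliary: a multiset whose elements are all of the form `φ s * α` has product
`φ s * α ^ card`. -/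
lemma aux_multiset_prod {K L : Type*} [Field K] [Field L] (φ : K →+* L) (α : L)
    (m : Multiset L) (h : ∀ r ∈ m, ∃ s : K, r = φ s * α) :
    ∃ s : K, m.prod = φ s * α ^ Multiset.card m := by
  induction m using Multiset.induction with
  | empty => exact ⟨1, by simp⟩
  | cons r m ih =>
    obtain ⟨s, hs⟩ := h r (Multiset.mem_cons_self r m)
    obtain ⟨t, ht⟩ := ih fun x hx => h x (Multiset.mem_cons_of_mem hx)
    refine ⟨s * t, ?_⟩
    rw [Multiset.prod_cons, hs, ht, Multiset.card_cons, map_mul]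
    ring

/-- Kummer: if `K` contains a primitive `d`-th root of unity and `c` is not a `p`-th power
for any prime `p ∣ d`, then `X ^ d - C c` is irreducible. -/
lemma kummer_irreducible {K : Type*} [Field K] {d : ℕ} (hd : 0 < d) {ζ : K}
    (hζ : IsPrimitiveRoot ζ d) {c : K} (hc : c ≠ 0)
    (H : ∀ p : ℕ, p.Prime → p ∣ d → ∀ b : K, b ^ p ≠ c) :
    Irreducible (X ^ d - C c) := by
  have hfne : (X ^ d - C c : K[X]) ≠ 0 := X_pow_sub_C_ne_zero hd c
  have hfu : ¬ IsUnit (X ^ d - C c : K[X]) := by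
    rw [Polynomial.isUnit_iff_degree_eq_zero, degree_X_pow_sub_C hd, Nat.cast_eq_zero]
    exact hd.ne'
  obtain ⟨g₀, hg₀, hg₀d⟩ := WfDvdMonoid.exists_irreducible_factor hfu hfne
  -- normalize to a monic irreducible factor g
  set g : K[X] := g₀ * C (leadingCoeff g₀)⁻¹ with hgdef
  have hgmonic : g.Monic := monic_mul_leadingCoeff_inv hg₀.ne_zero
  have hassoc : Associated g₀ g := by
    refine associated_mul_unit_right _ _ (isUnit_C.mpr ?_)
    exact (leadingCoeff_ne_zero.mpr hg₀.ne_zero).isUnit.inv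
  have hg : Irreducible g := hassoc.irreducible hg₀
  have hgd : g ∣ X ^ d - C c := hassoc.symm.dvd.trans hg₀d
  -- it suffices to show natDegree g = d
  suffices hdeg : g.natDegree = d by
    refine (associated_of_dvd_of_natDegree_le hgd hfne ?_).irreducible hg
    rw [hdeg, natDegree_X_pow_sub_C]
  set e := g.natDegree with he
  have hele : e ≤ d := natDegree_X_pow_sub_C (n := d) (r := c) ▸ natDegree_le_of_dvd hgd hfne
  have hepos : 0 < e := hg.natDegree_pos
  by_contra hne
  have helt : e < d := lt_of_le_of_ne hele hne
  -- pass to the field L = K[x]/(g)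
  have : NeZero d := ⟨hd.ne'⟩
  have : Fact (Irreducible g) := ⟨hg⟩
  set L := AdjoinRoot g
  set φ := algebraMap K L with hφ
  have hφinj : Function.Injective φ := φ.injective
  set α := AdjoinRoot.root g with hα
  have hαd : α ^ d = φ c := by
    have := Polynomial.eval₂_eq_zero_of_dvd_of_eval₂_eq_zero φ α hgd (AdjoinRoot.eval₂_root g)
    rw [eval₂_sub, eval₂_pow, eval₂_C, eval₂_X, sub_eq_zero] at this
    exact this
  have hcL : φ c ≠ 0 := fun h => hc (hφinj (h.trans (map_zero φ).symm))
  have hα0 : α ≠ 0 := fun h => hcL (by rw [← hαd, h, zero_pow hd.ne'])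
  -- the image of ζ is a primitive root in L
  have hζ' : IsPrimitiveRoot (φ ζ) d := hζ.map_of_injective hφinj
  -- g maps to a monic polynomial splitting in L
  set g' := g.map φ with hg'
  have hg'monic : g'.Monic := hgmonic.map φ
  have hg'dvd : g' ∣ (X ^ d - C (φ c)) := by
    have := Polynomial.map_dvd φ hgd
    rwa [Polynomial.map_sub, Polynomial.map_pow, map_X, map_C] at this
  have hfsplits : Splits (X ^ d - C (φ c) : L[X]) := by
    rw [X_pow_sub_C_eq_prod hζ' hd hαd]
    exact Splits.prod fun i _ => Splits.X_sub_C _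
  have hg'splits : Splits g' := by
    refine hfsplits.of_dvd (X_pow_sub_C_ne_zero hd (φ c)) hg'dvd
  -- roots of g' are of the form (unit in image of K) * α
  have hroot : ∀ r ∈ g'.roots, r ^ d = φ c := by
    intro r hr
    have hr' : IsRoot g' r := isRoot_of_mem_roots hr
    have : IsRoot (X ^ d - C (φ c)) r := by
      obtain ⟨u, hu⟩ := hg'dvd
      rw [hu, IsRoot, eval_mul, hr'.eq_zero, zero_mul]
    simpa [IsRoot, eval_sub, eval_pow, eval_X, eval_C, sub_eq_zero] using this
  have hform : ∀ r ∈ g'.roots, ∃ s : K, -r = φ s * α := by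
    intro r hr
    have h1 : (r * α⁻¹) ^ d = 1 := by
      rw [mul_pow, hroot r hr, inv_pow, ← hαd, mul_inv_cancel₀ (pow_ne_zero _ hα0)]
    obtain ⟨i, _, hi⟩ := hζ'.eq_pow_of_pow_eq_one (k := d) h1
    refine ⟨-(ζ ^ i), ?_⟩
    rw [map_neg, map_pow, hi, neg_mul, inv_mul_cancel_right₀ hα0]
  -- compare constant terms
  have hcard : Multiset.card g'.roots = e := by
    rw [splits_iff_card_roots.mp hg'splits, hg', natDegree_map]
  have hfact : g' = (g'.roots.map fun r => X - C r).prod :=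
    hg'splits.eq_prod_roots_of_monic hg'monic
  have heval : φ (g.eval 0) = (g'.roots.map fun r => -r).prod := by
    have h0 : g'.eval 0 = φ (g.eval 0) := by
      rw [hg', eval_map, eval₂_at_zero, coeff_zero_eq_eval_zero]
    rw [← h0]
    conv_lhs => rw [hfact]
    rw [eval_multiset_prod, Multiset.map_map]
    congr 1
    apply Multiset.map_congr rfl
    intro r _
    simp
  obtain ⟨s, hs⟩ := aux_multiset_prod φ α (g'.roots.map fun r => -r)
    (by
      intro r hr
      obtain ⟨r', hr', rfl⟩ := Multiset.mem_map.mp hr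
      exact hform r' hr')
  rw [Multiset.card_map, hcard] at hs
  rw [hs] at heval
  -- g.eval 0 ≠ 0 since 0 is not a root of X^d - C c
  have hev0 : g.eval 0 ≠ 0 := by
    intro h0
    have : (X ^ d - C c : K[X]).eval 0 = 0 := by
      obtain ⟨u, hu⟩ := hgd
      rw [hu, eval_mul, h0, zero_mul]
    simp only [eval_sub, eval_pow, eval_X, eval_C, zero_pow hd.ne', zero_sub, neg_eq_zero] at this
    exact hc this
  have hsne : s ≠ 0 := by
    rintro rfl
    rw [map_zero, zero_mul] at heval
    exact hev0 (hφinj (heval.trans (map_zero φ).symm))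
  -- so α ^ e is in the image of K
  have hb : φ (g.eval 0 / s) = α ^ e := by
    have hφs : φ s ≠ 0 := fun h => hsne (hφinj (h.trans (map_zero φ).symm))
    rw [map_div₀, heval, mul_comm, mul_div_assoc, div_self hφs, mul_one]
  set b := g.eval 0 / s with hbdef
  have hbne : b ≠ 0 := div_ne_zero hev0 hsne
  -- Bezout: α ^ gcd e d is in the image of K
  set m := Nat.gcd e d with hm
  have hmpos : 0 < m := Nat.gcd_pos_of_pos_left d hepos
  have hmdvd : m ∣ d := Nat.gcd_dvd_right e d
  have hbezout : (m : ℤ) = e * Nat.gcdA e d + d * Nat.gcdB e d := Nat.gcd_eq_gcd_ab e d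
  set b₀ : K := b ^ Nat.gcdA e d * c ^ Nat.gcdB e d with hb₀
  have hαm : α ^ (m : ℤ) = φ b₀ := by
    rw [hbezout, zpow_add₀ hα0, zpow_mul, zpow_mul, zpow_natCast, zpow_natCast, ← hb, hαd,
      hb₀, map_mul, map_zpow₀, map_zpow₀]
  have hαm' : α ^ m = φ b₀ := by
    rw [← zpow_natCast, hαm]
  -- c = b₀ ^ (d / m)
  have hcb : c = b₀ ^ (d / m) := by
    apply hφinj
    rw [map_pow, ← hαm', ← pow_mul, Nat.mul_div_cancel' hmdvd, hαd]
  -- derive contradiction: d / m has a prime factor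
  have hmlt : m < d := lt_of_le_of_lt (Nat.le_of_dvd hepos (Nat.gcd_dvd_left e d)) helt
  have hdm1 : d / m ≠ 1 := by
    intro h1
    have := Nat.div_mul_cancel hmdvd
    rw [h1, one_mul] at this
    exact hmlt.ne this
  obtain ⟨p, hp, hpdvd⟩ := Nat.exists_prime_and_dvd hdm1
  have hpd : p ∣ d := hpdvd.trans (Nat.div_dvd_of_dvd hmdvd)
  refine H p hp hpd (b₀ ^ (d / m / p)) ?_
  rw [← pow_mul, Nat.div_mul_cancel hpdvd, ← hcb]

theorem statement7 (q : ℕ) [Fact q.Prime] (d : ℕ) (hd : 2 ≤ d) (hqd : ¬ q ∣ d)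
    (a : AlgebraicClosure (ZMod q)) (ha : a ≠ 0) :
    Irreducible (Polynomial.X ^ d -
      Polynomial.C ((RatFunc.X : RatFunc (AlgebraicClosure (ZMod q))) ^ d + RatFunc.C a)) := by
  have hdpos : 0 < d := lt_of_lt_of_le two_pos hd
  -- (d : k) ≠ 0
  have hdk : (d : AlgebraicClosure (ZMod q)) ≠ 0 := by
    rw [Ne, CharP.cast_eq_zero_iff (AlgebraicClosure (ZMod q)) q d]
    exact hqd
  have : NeZero (d : AlgebraicClosure (ZMod q)) := ⟨hdk⟩
  -- primitive d-th root of unity in k, hence in K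
  obtain ⟨ζ, hζ⟩ := HasEnoughRootsOfUnity.exists_primitiveRoot (AlgebraicClosure (ZMod q)) d
  have hζK : IsPrimitiveRoot (RatFunc.C ζ : RatFunc (AlgebraicClosure (ZMod q))) d :=
    hζ.map_of_injective (RatFunc.C (K := AlgebraicClosure (ZMod q))).injective
  -- c as the image of the polynomial f = X^d + C a
  have hfne : (X ^ d + C a : (AlgebraicClosure (ZMod q))[X]) ≠ 0 := X_pow_add_C_ne_zero hdpos a
  have hcalg : (RatFunc.X : RatFunc (AlgebraicClosure (ZMod q))) ^ d + RatFunc.C a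
      = algebraMap ((AlgebraicClosure (ZMod q))[X]) (RatFunc (AlgebraicClosure (ZMod q)))
        (X ^ d + C a) := by
    rw [map_add, map_pow, RatFunc.algebraMap_X, RatFunc.algebraMap_C]
  have hinj : Function.Injective (algebraMap ((AlgebraicClosure (ZMod q))[X])
      (RatFunc (AlgebraicClosure (ZMod q)))) := IsFractionRing.injective _ _
  have hcne : (RatFunc.X : RatFunc (AlgebraicClosure (ZMod q))) ^ d + RatFunc.C a ≠ 0 := by
    rw [hcalg]
    intro h
    exact hfne (hinj (h.trans (map_zero _).symm))
  -- f is squarefree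
  have hfsep : (X ^ d + C a : (AlgebraicClosure (ZMod q))[X]).Separable := by
    have heq : (X ^ d + C a : (AlgebraicClosure (ZMod q))[X]) = X ^ d - C (-a) := by
      rw [map_neg, sub_neg_eq_add]
    rw [heq]
    exact separable_X_pow_sub_C (-a) hdk (neg_ne_zero.mpr ha)
  have hfsq : Squarefree (X ^ d + C a : (AlgebraicClosure (ZMod q))[X]) := hfsep.squarefree
  -- c is not a p-th power for any prime p ∣ d
  have H : ∀ p : ℕ, p.Prime → p ∣ d → ∀ b : RatFunc (AlgebraicClosure (ZMod q)),
      b ^ p ≠ (RatFunc.X : RatFunc (AlgebraicClosure (ZMod q))) ^ d + RatFunc.C a := by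
    intro p hp hpd b hb
    rw [hcalg] at hb
    -- b is integral over k[X] since b^p is
    have hint : IsIntegral ((AlgebraicClosure (ZMod q))[X]) (b ^ p) := hb ▸ isIntegral_algebraMap
    obtain ⟨g, hg⟩ := IsIntegrallyClosed.isIntegral_iff.mp (hint.of_pow hp.pos)
    rw [← hg, ← map_pow] at hb
    have hgp : g ^ p = X ^ d + C a := hinj hb
    -- g^p = f contradicts squarefreeness of f
    have hgg : g * g ∣ (X ^ d + C a : (AlgebraicClosure (ZMod q))[X]) := by
      rw [← hgp, ← pow_two]
      exact pow_dvd_pow g hp.two_le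
    have hgu : IsUnit g := hfsq g hgg
    have h0 : (X ^ d + C a : (AlgebraicClosure (ZMod q))[X]).natDegree = 0 := by
      rw [← hgp, natDegree_pow, natDegree_eq_zero_of_isUnit hgu, mul_zero]
    rw [natDegree_X_pow_add_C] at h0
    exact (Nat.lt_of_lt_of_le two_pos hd).ne' h0
  exact kummer_irreducible hdpos hζK hcne H
end

section
/- Let q be a prime number, k the algebraic closure of 𝔽_q, and d ≥ 2 an integer with q ∤ d. Let a ∈ k with a ≠ 0. Then: (i) for every prime p dividing d, the element T^d + a of the rational function field k(T) is not a p-th power in k(T); and (ii) if 4 divides d, then T^d + a is not of the form −4 h^4 for any h ∈ k(T). -/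
/-!
A `p`-th power `h ^ p` in `k(T)` that is a polynomial has `h` integral over the integrally closed
ring `k[T]`, so `h` is itself a polynomial. But `T^d + a` is separable (as `q ∤ d` and `a ≠ 0`),
hence squarefree, and of positive degree, so it is no proper power of a polynomial. Over the
algebraically closed `k` the constant `-4` is a fourth power `c ^ 4`, so `-4 h^4 = ((c h)^2)^2` and
part (ii) is the case `p = 2` of part (i).
-/

open Polynomial

theorem IsIntegrallyClosed.exists_pow_eq_of_pow_eq_algebraMap {R K : Type*} [CommRing R]
    [IsDomain R] [IsIntegrallyClosed R] [CommRing K] [Algebra R K] [IsFractionRing R K]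
    {n : ℕ} (hn : 0 < n) {x : K} {f : R} (hx : x ^ n = algebraMap R K f) :
    ∃ g : R, g ^ n = f := by
  obtain ⟨g, rfl⟩ := IsIntegrallyClosed.exists_algebraMap_eq_of_isIntegral_pow hn
    (hx ▸ isIntegral_algebraMap)
  exact ⟨g, IsFractionRing.injective R K (by rw [map_pow, hx])⟩

theorem Squarefree.pow_ne_of_not_isUnit {R : Type*} [CommMonoid R] {f : R} (hf : Squarefree f)
    (hf' : ¬IsUnit f) {n : ℕ} (hn : 2 ≤ n) (g : R) : g ^ n ≠ f := by
  rintro rfl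
  have hg : ¬IsUnit g := fun hg => hf' (hg.pow n)
  have := hf.eq_zero_or_one_of_pow_of_not_isUnit hg
  omega

theorem pow_ne_algebraMap_of_squarefree {R K : Type*} [CommRing R] [IsDomain R]
    [IsIntegrallyClosed R] [CommRing K] [Algebra R K] [IsFractionRing R K] {f : R}
    (hf : Squarefree f) (hf' : ¬IsUnit f) {n : ℕ} (hn : 2 ≤ n) (x : K) :
    x ^ n ≠ algebraMap R K f := fun hx =>
  let ⟨g, hg⟩ := IsIntegrallyClosed.exists_pow_eq_of_pow_eq_algebraMap (by omega) hx
  hf.pow_ne_of_not_isUnit hf' hn g hg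

theorem Polynomial.squarefree_X_pow_add_C {F : Type*} [Field F] (p : ℕ) [CharP F p] {n : ℕ}
    (hn : ¬p ∣ n) {a : F} (ha : a ≠ 0) : Squarefree (X ^ n + C a) := by
  simpa only [map_neg, sub_neg_eq_add] using
    (separable_X_pow_sub_C' p n (-a) hn (neg_ne_zero.mpr ha)).squarefree

theorem RatFunc.pow_ne_X_pow_add_C {F : Type*} [Field F] (p : ℕ) [CharP F p] {d : ℕ}
    (hd : ¬p ∣ d) {a : F} (ha : a ≠ 0) {n : ℕ} (hn : 2 ≤ n) (h : RatFunc F) :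
    h ^ n ≠ RatFunc.X ^ d + RatFunc.C a := by
  have hd0 : d ≠ 0 := by rintro rfl; exact hd (dvd_zero p)
  have hunit : ¬IsUnit (Polynomial.X ^ d + Polynomial.C a : F[X]) := fun hu =>
    hd0 (natDegree_X_pow_add_C.symm.trans (natDegree_eq_zero_of_isUnit hu))
  rw [← algebraMap_X, ← algebraMap_C, ← map_pow, ← map_add]
  exact pow_ne_algebraMap_of_squarefree (squarefree_X_pow_add_C p hd ha) hunit hn h

theorem statement8_general (q : ℕ) [Fact q.Prime] (d : ℕ) (hqd : ¬ q ∣ d)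
    (a : AlgebraicClosure (ZMod q)) (ha : a ≠ 0) :
    (∀ p : ℕ, p.Prime → p ∣ d →
        ¬ ∃ h : RatFunc (AlgebraicClosure (ZMod q)),
          h ^ p = (RatFunc.X : RatFunc (AlgebraicClosure (ZMod q))) ^ d + RatFunc.C a) ∧
      (4 ∣ d →
        ¬ ∃ h : RatFunc (AlgebraicClosure (ZMod q)),
          (RatFunc.X : RatFunc (AlgebraicClosure (ZMod q))) ^ d + RatFunc.C a
            = -4 * h ^ 4) := by
  refine ⟨fun p hp _ ⟨h, hh⟩ => RatFunc.pow_ne_X_pow_add_C q hqd ha hp.two_le h hh,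
    fun _ ⟨h, hh⟩ => ?_⟩
  obtain ⟨c, hc⟩ := IsAlgClosed.exists_pow_nat_eq (-4 : AlgebraicClosure (ZMod q)) four_pos
  refine RatFunc.pow_ne_X_pow_add_C q hqd ha le_rfl ((RatFunc.C c * h) ^ 2) ?_
  rw [hh, ← pow_mul, mul_pow, ← map_pow, show 2 * 2 = 4 from rfl, hc, map_neg, map_ofNat]

theorem statement8 (q : ℕ) [Fact q.Prime] (d : ℕ) (hd : 2 ≤ d) (hqd : ¬ q ∣ d)
    (a : AlgebraicClosure (ZMod q)) (ha : a ≠ 0) :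
    (∀ p : ℕ, p.Prime → p ∣ d →
        ¬ ∃ h : RatFunc (AlgebraicClosure (ZMod q)),
          h ^ p = (RatFunc.X : RatFunc (AlgebraicClosure (ZMod q))) ^ d + RatFunc.C a) ∧
      (4 ∣ d →
        ¬ ∃ h : RatFunc (AlgebraicClosure (ZMod q)),
          (RatFunc.X : RatFunc (AlgebraicClosure (ZMod q))) ^ d + RatFunc.C a
            = -4 * h ^ 4) :=
  statement8_general q d hqd a ha
end

section
/- Let q be a prime number, k the algebraic closure of 𝔽_q, and m ≥ 2, d ≥ 2 integers with q ∤ d. Let a = (a_1, …, a_{m−1}) ∈ k^{m−1} and assume the partial sums A_i = ∑_{k=i}^{m−1} a_k, for i = 1, …, m−1, are pairwise distinct and all nonzero. Let C = {y ∈ k^m : y_i^d − y_{i+1}^d = a_i for 1 ≤ i ≤ m−1}. If r = (r_1, …, r_m) ∈ k^m and c ∈ k are such that r_1 y_1 + ⋯ + r_m y_m = c for every y ∈ C, then r_1 = ⋯ = r_m = 0. -/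
/-!
Pick a point `y` of `C` with no zero coordinate: its `d`-th powers only have to be prescribed
consecutive differences, which leaves a free additive constant to avoid zero. For a primitive
`d`-th root of unity `ζ ≠ 1`, replacing `y_i` by `ζ y_i` stays on `C`, so a linear form constant
on `C` satisfies `r_i y_i = r_i ζ y_i`, forcing `r_i = 0`.
-/

open scoped BigOperators

open Function Matrix

section

variable {K : Type*} [Field K]

def IsOnCurve {m : ℕ} (d : ℕ) (a : Fin (m - 1) → K) (y : Fin m → K) : Prop :=
  ∀ i : Fin (m - 1),
    y ⟨i.1, by have := i.isLt; omega⟩ ^ d - y ⟨i.1 + 1, by have := i.isLt; omega⟩ ^ d = a i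

lemma exists_forall_add_ne_zero {ι : Type*} [Finite ι] [Infinite K] (s : ι → K) :
    ∃ t : K, ∀ i, t + s i ≠ 0 := by
  classical
  have : Fintype ι := Fintype.ofFinite ι
  obtain ⟨t, ht⟩ := Infinite.exists_notMem_finset (Finset.univ.image fun i => -s i)
  refine ⟨t, fun i hi => ht (Finset.mem_image.2 ⟨i, Finset.mem_univ _, ?_⟩)⟩
  linear_combination -hi

lemma exists_forall_ne_zero_sub_succ_eq [Infinite K] {m : ℕ} (a : Fin (m - 1) → K) :
    ∃ u : Fin m → K, (∀ i, u i ≠ 0) ∧ ∀ i : Fin (m - 1),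
      u ⟨i.1, by have := i.isLt; omega⟩ - u ⟨i.1 + 1, by have := i.isLt; omega⟩ = a i := by
  classical
  let s : Fin m → K := fun i => ∑ j with i.1 ≤ j.1, a j
  obtain ⟨t, ht⟩ := exists_forall_add_ne_zero s
  refine ⟨fun i => t + s i, ht, fun i => ?_⟩
  simp only [s, add_sub_add_left_eq_sub, Finset.sum_filter, ← Finset.sum_sub_distrib]
  rw [Finset.sum_eq_single i (fun j _ hj => ?_) (by simp)]
  · simp
  · have : j.1 ≠ i.1 := Fin.val_ne_of_ne hj
    split_ifs <;> first | omega | simp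

lemma exists_isOnCurve_forall_ne_zero [IsAlgClosed K] {m d : ℕ} (hd : d ≠ 0)
    (a : Fin (m - 1) → K) : ∃ y : Fin m → K, IsOnCurve d a y ∧ ∀ i, y i ≠ 0 := by
  obtain ⟨u, hu0, hu⟩ := exists_forall_ne_zero_sub_succ_eq a
  choose y hy using fun i => IsAlgClosed.exists_pow_nat_eq (u i) (Nat.pos_of_ne_zero hd)
  refine ⟨y, fun i => by simpa only [hy] using hu i, fun i hi => hu0 i ?_⟩
  rw [← hy, hi, zero_pow hd]

lemma pow_update_mul_of_pow_eq_one {ι : Type*} [DecidableEq ι] {d : ℕ} {ζ : K} (hζ : ζ ^ d = 1)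
    (y : ι → K) (i j : ι) : update y i (ζ * y i) j ^ d = y j ^ d := by
  rcases eq_or_ne j i with rfl | hj
  · rw [update_self, mul_pow, hζ, one_mul]
  · rw [update_of_ne hj]

lemma IsOnCurve.update_mul {m d : ℕ} {a : Fin (m - 1) → K} {y : Fin m → K} (hy : IsOnCurve d a y)
    {ζ : K} (hζ : ζ ^ d = 1) (i : Fin m) : IsOnCurve d a (update y i (ζ * y i)) := by
  intro j
  simpa only [pow_update_mul_of_pow_eq_one hζ] using hy j

lemma eq_zero_of_dotProduct_update_mul {ι : Type*} [Fintype ι] [DecidableEq ι] {r y : ι → K}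
    {i : ι} {ζ : K} (hζ : ζ ≠ 1) (hy : y i ≠ 0) (h : r ⬝ᵥ update y i (ζ * y i) = r ⬝ᵥ y) :
    r i = 0 := by
  have hupdate : update y i (ζ * y i) = y + Pi.single i ((ζ - 1) * y i) := by
    ext j
    rcases eq_or_ne j i with rfl | hj
    · simp only [update_self, Pi.add_apply, Pi.single_eq_same]; ring
    · simp [hj]
  rw [hupdate, dotProduct_add, dotProduct_single, add_eq_left] at h
  simpa [sub_eq_zero, hζ, hy] using h

end

theorem statement16 (q : ℕ) [Fact q.Prime] (m d : ℕ) (hd : 2 ≤ d)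
    (hqd : ¬ q ∣ d) (a : Fin (m - 1) → AlgebraicClosure (ZMod q))
    (r : Fin m → AlgebraicClosure (ZMod q)) (c : AlgebraicClosure (ZMod q))
    (hconst : ∀ y : Fin m → AlgebraicClosure (ZMod q),
      (∀ i : Fin (m - 1),
        y ⟨i.1, by have := i.isLt; omega⟩ ^ d -
          y ⟨i.1 + 1, by have := i.isLt; omega⟩ ^ d = a i) →
      ∑ i : Fin m, r i * y i = c) :
    ∀ i, r i = 0 := by
  intro i
  have : NeZero (d : AlgebraicClosure (ZMod q)) :=
    ⟨fun h => hqd ((CharP.cast_eq_zero_iff _ q d).mp h)⟩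
  obtain ⟨ζ, hζ⟩ := HasEnoughRootsOfUnity.exists_primitiveRoot (AlgebraicClosure (ZMod q)) d
  obtain ⟨y, hyC, hy0⟩ := exists_isOnCurve_forall_ne_zero (d := d) (by omega) a
  exact eq_zero_of_dotProduct_update_mul (hζ.ne_one (by omega)) (hy0 i)
    ((hconst _ (hyC.update_mul hζ.pow_eq_one i)).trans (hconst y hyC).symm)
end

section
/- Let q be a prime number, k the algebraic closure of 𝔽_q, and m ≥ 2, d ≥ 2 integers with q ∤ d. Let a = (a_1, …, a_{m−1}) ∈ k^{m−1} with the partial sums A_i = ∑_{k=i}^{m−1} a_k pairwise distinct and all nonzero, so that R = k[x_1, …, x_m]/⟨g_1, …, g_{m−1}⟩ (with g_j = x_j^d − x_{j+1}^d − a_j) is an integral domain. Let L be the fraction field of R and K ⊆ L the subfield generated over k by the image of x_1. Then L is a finite extension of K of degree [L : K] = d^{m−1}. -/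
open scoped BigOperators

/-- The coordinate ring `R = k[x_1, …, x_m]/⟨g_1, …, g_{m−1}⟩` of the curve. -/
abbrev curveRing (q : ℕ) [Fact q.Prime] (m d : ℕ)
    (a : Fin (m - 1) → AlgebraicClosure (ZMod q)) : Type _ :=
  MvPolynomial (Fin m) (AlgebraicClosure (ZMod q)) ⧸ Ideal.span (Set.range (gPoly m d a))

/-! Make `R` a `k[X]`-algebra through `X ↦ x₁`. The monomials `∏ⱼ x_{j+1}^{eⱼ}` with `eⱼ < d` span
`R` over `k[X]`: the relations rewrite `x_{j+1}^d` as `x_j^d - a_j`, and finally `x₁^d` is a scalar.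
They are also independent. Send `x₁` to a transcendental `t` of an algebraically closed field,
`x_{j+1}` to `ζⱼ βⱼ₊₁`, where `β₀ = t`, `β_{j+1}^d = β_j^d - a_j` and `ζ` is any tuple of `d`-th
roots of unity. A relation among the monomials becomes a relation among the characters
`ζ ↦ ζ^e` of `μ_d^{m-1}`, which are linearly independent (Dedekind); `q ∤ d` provides a primitive
`d`-th root of unity. So `R` is free of rank `d^(m-1)` over `k[X]`, and this rank is the degree of
`Frac R` over the fraction field `k(x₁)` of `k[X]`. -/

open MvPolynomial

noncomputable section

theorem Subfield.closure_range_aeval {F L : Type*} [Field F] [Field L] [Algebra F L] (x : L) :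
    Subfield.closure (Set.range (Polynomial.aeval (R := F) x)) =
      Subfield.closure (Set.range (algebraMap F L) ∪ {x}) := by
  refine le_antisymm (Subfield.closure_le.2 ?_) (Subfield.closure_mono ?_)
  · rintro _ ⟨p, rfl⟩
    have hp : Polynomial.aeval x p ∈ (Algebra.adjoin F {x}).toSubring :=
      Polynomial.aeval_mem_adjoin_singleton F x
    rw [Algebra.adjoin_eq_ring_closure] at hp
    exact Subfield.subring_closure_le _ hp
  · rintro _ (⟨c, rfl⟩ | rfl)
    · exact ⟨Polynomial.C c, Polynomial.aeval_C _ c⟩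
    · exact ⟨Polynomial.X, Polynomial.aeval_X _⟩

theorem finrank_closure_range_algebraMap (A B : Type*) [CommRing A] [IsDomain A] [CommRing B]
    [IsDomain B] [Algebra A B] [FaithfulSMul A B] :
    Module.finrank (Subfield.closure (Set.range (algebraMap A (FractionRing B))))
      (FractionRing B) = Module.finrank A B := by
  set L := FractionRing B
  set K := Subfield.closure (Set.range (algebraMap A L))
  have hinj : Function.Injective (algebraMap A L) :=
    (IsFractionRing.injective B L).comp (FaithfulSMul.algebraMap_injective A B)
  let _ : Algebra A K :=
    ((algebraMap A L).codRestrict K fun r => Subfield.subset_closure ⟨r, rfl⟩).toAlgebra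
  have : IsScalarTower A K L := IsScalarTower.of_algebraMap_eq fun _ => rfl
  have : FaithfulSMul A K := (faithfulSMul_iff_algebraMap_injective A K).2 fun r s h =>
    hinj congr(($h : L))
  have : IsFractionRing A K := IsFractionRing.of_field A K fun z => by
    obtain ⟨w, hw⟩ : (z : L) ∈ (IsFractionRing.lift hinj : FractionRing A →+* L).fieldRange := by
      rw [IsFractionRing.lift_fieldRange, RingHom.coe_range]; exact z.2
    obtain ⟨x, y, -, rfl⟩ := IsFractionRing.div_surjective A w
    refine ⟨x, y, Subtype.ext ?_⟩
    simp only [← hw, map_div₀, IsFractionRing.lift_algebraMap, Subfield.coe_div]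
    rfl
  exact IsFractionRing.finrank_eq A K B L

theorem exists_pow_chain {F Ω : Type*} [Field F] [Field Ω] [IsAlgClosed Ω] [Algebra F Ω] {t : Ω}
    (ht : Transcendental F t) {d : ℕ} (hd : 0 < d) (c : ℕ → F) :
    ∃ β : ℕ → Ω, β 0 = t ∧ (∀ i, β (i + 1) ^ d = β i ^ d - algebraMap F Ω (c i)) ∧
      ∀ i, β i ≠ 0 := by
  let β : ℕ → Ω := fun i => Nat.rec t (fun i b => Classical.choose
    (IsAlgClosed.exists_pow_nat_eq (b ^ d - algebraMap F Ω (c i)) hd)) i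
  have hβ : ∀ i, β (i + 1) ^ d = β i ^ d - algebraMap F Ω (c i) :=
    fun i => Classical.choose_spec (IsAlgClosed.exists_pow_nat_eq _ hd)
  have hβ_pow : ∀ i, β i ^ d =
      Polynomial.aeval t (Polynomial.X ^ d - Polynomial.C (∑ k ∈ Finset.range i, c k)) := by
    intro i
    induction i with
    | zero => simp [β]
    | succ i ih =>
      rw [hβ, ih, Finset.sum_range_succ]
      simp only [map_sub, map_pow, map_add, Polynomial.aeval_X, Polynomial.aeval_C]
      ring
  refine ⟨β, rfl, hβ, fun i hi => ht ⟨_, Polynomial.X_pow_sub_C_ne_zero hd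
    (∑ k ∈ Finset.range i, c k), ?_⟩⟩
  rw [← hβ_pow, hi, zero_pow hd.ne']

namespace FermatChain

section Characters

variable {ι Ω : Type*} [Fintype ι] [CommRing Ω] {d : ℕ}

variable (d) in
def monomialChar (e : ι → ℕ) : (ι → rootsOfUnity d Ω) →* Ω where
  toFun ζ := ∏ i, ((ζ i : Ωˣ) : Ω) ^ e i
  map_one' := by simp
  map_mul' ζ ξ := by simp [mul_pow, Finset.prod_mul_distrib]

lemma monomialChar_apply (e : ι → ℕ) (ζ : ι → rootsOfUnity d Ω) :
    monomialChar d e ζ = ∏ i, ((ζ i : Ωˣ) : Ω) ^ e i := rfl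

lemma monomialChar_mulSingle [DecidableEq ι] (e : ι → ℕ) (i : ι) (ζ : rootsOfUnity d Ω) :
    monomialChar d e (Pi.mulSingle i ζ) = ((ζ : Ωˣ) : Ω) ^ e i := by
  rw [monomialChar_apply, Finset.prod_eq_single i (fun j _ hj => by simp [hj]) (by simp)]
  simp

variable [NeZero d] {ω : Ω}

lemma monomialChar_injective (hω : IsPrimitiveRoot ω d) :
    Function.Injective fun e : ι → Fin d => monomialChar (Ω := Ω) d fun i => (e i : ℕ) := by
  classical
  intro e e' h
  funext i
  have := congr($h (Pi.mulSingle i hω.toRootsOfUnity))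
  simp only [monomialChar_mulSingle, IsPrimitiveRoot.val_toRootsOfUnity_coe] at this
  exact Fin.ext (hω.pow_inj (e i).2 (e' i).2 this)

lemma linearIndependent_monomialChar [IsDomain Ω] (hω : IsPrimitiveRoot ω d) :
    LinearIndependent Ω fun e : ι → Fin d =>
      ⇑(monomialChar (Ω := Ω) d fun i => (e i : ℕ)) :=
  (linearIndependent_monoidHom _ Ω).comp _ (monomialChar_injective hω)

end Characters

section CoordRing

variable {F : Type*} [Field F] (d : ℕ) {n : ℕ} (a : Fin (n + 1) → F)

abbrev CoordRing : Type _ :=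
  MvPolynomial (Fin (n + 2)) F ⧸ Ideal.span (Set.range (gPoly (n + 2) d a))

def coord (i : Fin (n + 2)) : CoordRing d a := Ideal.Quotient.mk _ (X i)

lemma coord_succ_pow (j : Fin (n + 1)) :
    coord d a j.succ ^ d = coord d a j.castSucc ^ d - algebraMap F (CoordRing d a) (a j) := by
  have hg : gPoly (n + 2) d a j = X j.castSucc ^ d - X j.succ ^ d - C (a j) := rfl
  have h : (Ideal.Quotient.mk _ (gPoly (n + 2) d a j) : CoordRing d a) = 0 :=
    Ideal.Quotient.eq_zero_iff_mem.2 (Ideal.subset_span ⟨j, rfl⟩)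
  rw [hg, map_sub, map_sub, sub_sub, sub_eq_zero] at h
  rw [coord, coord, ← map_pow, ← map_pow, h]
  exact (add_sub_cancel_right _ _).symm

def standardMonomial (e : Fin (n + 1) → Fin d) : CoordRing d a :=
  ∏ j, coord d a j.succ ^ (e j : ℕ)

abbrev polynomialAlgebra : Algebra (Polynomial F) (CoordRing d a) :=
  (Polynomial.aeval (coord d a 0)).toAlgebra

attribute [local instance] polynomialAlgebra

lemma polynomial_smul_def (p : Polynomial F) (r : CoordRing d a) :
    p • r = Polynomial.aeval (coord d a 0) p * r :=
  Algebra.smul_def p r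

local notation "𝓑" => Submodule.span (Polynomial F) (Set.range (standardMonomial d a))

lemma standardMonomial_update (e : Fin (n + 1) → Fin d) (j : Fin (n + 1)) (v : Fin d) :
    standardMonomial d a (Function.update e j v) =
      coord d a j.succ ^ (v : ℕ) * ∏ k ∈ Finset.univ.erase j, coord d a k.succ ^ (e k : ℕ) := by
  rw [standardMonomial, ← Finset.mul_prod_erase _ _ (Finset.mem_univ j), Function.update_self]
  congr 1
  exact Finset.prod_congr rfl fun k hk => by rw [Function.update_of_ne (Finset.ne_of_mem_erase hk)]

lemma coord_pow_mul_mem_span (i : Fin (n + 2)) (e : Fin (n + 1) → Fin d) :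
    coord d a i ^ d * standardMonomial d a e ∈ 𝓑 := by
  induction i using Fin.induction with
  | zero =>
    simpa [polynomial_smul_def] using
      Submodule.smul_mem 𝓑 (Polynomial.X ^ d) (Submodule.subset_span ⟨e, rfl⟩)
  | succ j ih =>
    rw [coord_succ_pow, sub_mul]
    refine Submodule.sub_mem _ ih ?_
    simpa [polynomial_smul_def] using
      Submodule.smul_mem 𝓑 (Polynomial.C (a j)) (Submodule.subset_span ⟨e, rfl⟩)

lemma coord_mul_mem_span (i : Fin (n + 2)) (e : Fin (n + 1) → Fin d) :
    coord d a i * standardMonomial d a e ∈ 𝓑 := by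
  induction i using Fin.cases with
  | zero =>
    simpa [polynomial_smul_def] using
      Submodule.smul_mem 𝓑 Polynomial.X (Submodule.subset_span ⟨e, rfl⟩)
  | succ j =>
    have he : standardMonomial d a e = coord d a j.succ ^ (e j : ℕ) *
        ∏ k ∈ Finset.univ.erase j, coord d a k.succ ^ (e k : ℕ) := by
      rw [← standardMonomial_update, Function.update_eq_self]
    by_cases h : (e j : ℕ) + 1 < d
    · rw [he, ← mul_assoc, ← pow_succ', ← Fin.val_mk h, ← standardMonomial_update]
      exact Submodule.subset_span ⟨_, rfl⟩
    · have hd : (e j : ℕ) + 1 = d := by omega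
      have := coord_pow_mul_mem_span d a j.succ (Function.update e j ⟨0, by omega⟩)
      rw [standardMonomial_update, Fin.val_mk, pow_zero, one_mul] at this
      rwa [he, ← mul_assoc, ← pow_succ', hd]

lemma mul_mem_span (r : CoordRing d a) {w : CoordRing d a} (hw : w ∈ 𝓑) : r * w ∈ 𝓑 := by
  obtain ⟨p, rfl⟩ := Ideal.Quotient.mk_surjective r
  induction p using MvPolynomial.induction_on generalizing w with
  | C c =>
    have hc : Ideal.Quotient.mk _ (C c) = Polynomial.aeval (coord d a 0) (Polynomial.C c) := by
      rw [Polynomial.aeval_C]; rfl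
    rw [hc, ← polynomial_smul_def]
    exact Submodule.smul_mem _ _ hw
  | add p q hp hq => rw [map_add, add_mul]; exact Submodule.add_mem _ (hp hw) (hq hw)
  | mul_X p i hp =>
    rw [map_mul, mul_assoc]
    refine hp ?_
    induction hw using Submodule.span_induction with
    | mem w hw => obtain ⟨e, rfl⟩ := hw; exact coord_mul_mem_span d a i e
    | zero => rw [mul_zero]; exact Submodule.zero_mem _
    | add x y _ _ hx hy => rw [mul_add]; exact Submodule.add_mem _ hx hy
    | smul c x _ hx => rw [mul_smul_comm]; exact Submodule.smul_mem _ _ hx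

lemma span_standardMonomial (hd : 0 < d) : 𝓑 = ⊤ := by
  refine Submodule.eq_top_iff'.2 fun r => ?_
  have h1 : standardMonomial d a (fun _ => ⟨0, hd⟩) = 1 := by simp [standardMonomial]
  simpa [h1] using mul_mem_span d a r (Submodule.subset_span ⟨_, h1⟩)

section Twist

variable {Ω : Type*} [Field Ω] [Algebra F Ω] (β : ℕ → Ω) (ζ : Fin (n + 1) → rootsOfUnity d Ω)

def twistedPoint : Fin (n + 2) → Ω :=
  fun i => (Fin.cons 1 (fun j => ((ζ j : Ωˣ) : Ω)) : Fin (n + 2) → Ω) i * β i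

lemma twistedPoint_zero : twistedPoint d β ζ 0 = β 0 := by simp [twistedPoint]

lemma twistedPoint_succ (j : Fin (n + 1)) :
    twistedPoint d β ζ j.succ = (ζ j : Ωˣ) * β (j + 1) := by simp [twistedPoint]

lemma twistedPoint_pow (i : Fin (n + 2)) : twistedPoint d β ζ i ^ d = β i ^ d := by
  induction i using Fin.cases with
  | zero => rw [twistedPoint_zero]; rfl
  | succ j =>
    rw [twistedPoint_succ, mul_pow, ← Units.val_pow_eq_pow_val,
      (mem_rootsOfUnity d (ζ j : Ωˣ)).1 (ζ j).2, Units.val_one, one_mul]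
    rfl

variable {β}
variable (hβ : ∀ j : Fin (n + 1), β (j + 1) ^ d = β j ^ d - algebraMap F Ω (a j))

include hβ in
lemma aeval_twistedPoint_gPoly (j : Fin (n + 1)) :
    MvPolynomial.aeval (twistedPoint d β ζ) (gPoly (n + 2) d a j) = 0 := by
  have hg : gPoly (n + 2) d a j = X j.castSucc ^ d - X j.succ ^ d - C (a j) := rfl
  rw [hg, map_sub, map_sub, map_pow, map_pow, aeval_X, aeval_X, aeval_C, twistedPoint_pow,
    twistedPoint_pow, Fin.val_succ, hβ, Fin.val_castSucc]
  ring

def twistedEval : CoordRing d a →ₐ[F] Ω :=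
  Ideal.Quotient.liftₐ _ (MvPolynomial.aeval (twistedPoint d β ζ)) fun p hp => by
    refine Submodule.span_induction ?_ (map_zero _)
      (fun _ _ _ _ hx hy => by rw [map_add, hx, hy, add_zero])
      (fun r x _ hx => by rw [smul_eq_mul, map_mul, hx, mul_zero]) hp
    rintro _ ⟨j, rfl⟩
    exact aeval_twistedPoint_gPoly d a ζ hβ j

lemma twistedEval_coord (i : Fin (n + 2)) :
    twistedEval d a ζ hβ (coord d a i) = twistedPoint d β ζ i :=
  aeval_X _ _

lemma twistedEval_smul (p : Polynomial F) (r : CoordRing d a) :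
    twistedEval d a ζ hβ (p • r) = Polynomial.aeval (β 0) p * twistedEval d a ζ hβ r := by
  rw [polynomial_smul_def, map_mul, ← Polynomial.aeval_algHom_apply, twistedEval_coord,
    twistedPoint_zero]

lemma twistedEval_standardMonomial (e : Fin (n + 1) → Fin d) :
    twistedEval d a ζ hβ (standardMonomial d a e) =
      monomialChar d (fun j => (e j : ℕ)) ζ * ∏ j : Fin (n + 1), β (j + 1) ^ (e j : ℕ) := by
  simp only [standardMonomial, map_prod, map_pow, twistedEval_coord, twistedPoint_succ, mul_pow,
    Finset.prod_mul_distrib, monomialChar_apply]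

end Twist

lemma linearIndependent_standardMonomial_of_transcendental {Ω : Type*} [Field Ω] [IsAlgClosed Ω]
    [Algebra F Ω] {t : Ω} (ht : Transcendental F t) [NeZero d] {ω : Ω}
    (hω : IsPrimitiveRoot ω d) : LinearIndependent (Polynomial F) (standardMonomial d a) := by
  obtain ⟨β, rfl, hβ, hβ_ne⟩ := exists_pow_chain ht (NeZero.pos d)
    fun i => if h : i < n + 1 then a ⟨i, h⟩ else 0
  have hβa : ∀ j : Fin (n + 1), β (j + 1) ^ d = β j ^ d - algebraMap F Ω (a j) := fun j => by
    simp [hβ, j.isLt]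
  have hli := linearIndependent_monomialChar (ι := Fin (n + 1)) hω
  have hchar := Fintype.linearIndependent_iff.1 hli
  rw [Fintype.linearIndependent_iff]
  intro f hf e
  have hcoeff : ∀ e,
      Polynomial.aeval (β 0) (f e) * ∏ j : Fin (n + 1), β (j + 1) ^ (e j : ℕ) = 0 := by
    refine hchar _ (funext fun ζ => ?_)
    have := congrArg (twistedEval d a ζ hβa) hf
    rw [map_sum, map_zero] at this
    simp only [twistedEval_smul, twistedEval_standardMonomial] at this
    simp only [Finset.sum_apply, Pi.smul_apply, smul_eq_mul, Pi.zero_apply, ← this]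
    exact Finset.sum_congr rfl fun e _ => by ring
  have hprod : ∏ j : Fin (n + 1), β (j + 1) ^ (e j : ℕ) ≠ 0 :=
    Finset.prod_ne_zero_iff.2 fun j _ => pow_ne_zero _ (hβ_ne _)
  exact transcendental_iff_injective.1 ht <| by
    rw [map_zero]; exact (mul_eq_zero.1 (hcoeff e)).resolve_right hprod

lemma linearIndependent_standardMonomial (hd : (d : F) ≠ 0) :
    LinearIndependent (Polynomial F) (standardMonomial d a) := by
  let Ω := AlgebraicClosure (RatFunc F)
  have : NeZero (d : Ω) := ⟨by rwa [← map_natCast (algebraMap F Ω), map_ne_zero]⟩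
  have : NeZero d := NeZero.of_neZero_natCast Ω
  have ht : Transcendental F (algebraMap (RatFunc F) Ω RatFunc.X) :=
    (transcendental_algebraMap_iff (algebraMap (RatFunc F) Ω).injective).2 RatFunc.transcendental_X
  obtain ⟨ω, hω⟩ := HasEnoughRootsOfUnity.exists_primitiveRoot Ω d
  exact linearIndependent_standardMonomial_of_transcendental d a ht hω

theorem finrank_fractionRing [IsDomain (CoordRing d a)] (hd : (d : F) ≠ 0) :
    Module.finrank (Subfield.closure (Set.range (algebraMap F (FractionRing (CoordRing d a))) ∪
      {algebraMap (CoordRing d a) _ (coord d a 0)})) (FractionRing (CoordRing d a)) =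
      d ^ (n + 1) := by
  have hd_pos : 0 < d := Nat.pos_of_ne_zero fun h => hd (by rw [h, Nat.cast_zero])
  let b := Module.Basis.mk (linearIndependent_standardMonomial d a hd)
    (span_standardMonomial d a hd_pos).ge
  have : Module.Free (Polynomial F) (CoordRing d a) := .of_basis b
  have hrange : ⇑(algebraMap (Polynomial F) (FractionRing (CoordRing d a))) =
      Polynomial.aeval (algebraMap (CoordRing d a) _ (coord d a 0)) := by
    funext p
    rw [IsScalarTower.algebraMap_apply (Polynomial F) (CoordRing d a),
      ← IsScalarTower.coe_toAlgHom' F (CoordRing d a), Polynomial.aeval_algHom_apply]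
    rfl
  rw [← Subfield.closure_range_aeval, ← hrange, finrank_closure_range_algebraMap,
    Module.finrank_eq_card_basis b]
  simp

end CoordRing

end FermatChain

end

/-- `K` is the subfield of the fraction field `L` of `R` generated over (the image of) the
base field `k` by the image of `x_1`; then `L/K` is finite of degree `d^(m−1)`. -/
theorem statement17 (q : ℕ) [Fact q.Prime] (m d : ℕ) (hm : 2 ≤ m)
    (hqd : ¬ q ∣ d) (a : Fin (m - 1) → AlgebraicClosure (ZMod q))
    [IsDomain (curveRing q m d a)]
    (K : Subfield (FractionRing (curveRing q m d a)))
    (hK : K = Subfield.closure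
        (Set.range ((algebraMap (curveRing q m d a) (FractionRing (curveRing q m d a))).comp
            ((Ideal.Quotient.mk (Ideal.span (Set.range (gPoly m d a)))).comp
              (MvPolynomial.C))) ∪
          {algebraMap (curveRing q m d a) (FractionRing (curveRing q m d a))
            (Ideal.Quotient.mk (Ideal.span (Set.range (gPoly m d a)))
              (MvPolynomial.X ⟨0, by omega⟩))})) :
    FiniteDimensional K (FractionRing (curveRing q m d a)) ∧
      Module.finrank K (FractionRing (curveRing q m d a)) = d ^ (m - 1) := by
  obtain ⟨n, rfl⟩ : ∃ n, m = n + 2 := ⟨m - 2, by omega⟩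
  have hd : (d : AlgebraicClosure (ZMod q)) ≠ 0 := by
    rwa [← map_natCast (algebraMap (ZMod q) _), map_ne_zero, Ne, ZMod.natCast_eq_zero_iff]
  have hrank : Module.finrank K (FractionRing (curveRing q (n + 2) d a)) = d ^ (n + 1) := by
    rw [hK, Fin.mk_zero]
    exact FermatChain.finrank_fractionRing d a hd
  have hd_pos : 0 < d := Nat.pos_of_ne_zero fun h => hqd (h ▸ dvd_zero q)
  exact ⟨FiniteDimensional.of_finrank_pos (hrank ▸ pow_pos hd_pos _), hrank⟩
end
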